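/- Let G be a finite simple group. Then G is a B-group if and only if G is not abelian. -/

import Mathlib

/-!
The zeta matrix of the subgroup lattice is inverted by the Möbius function of its incidence
algebra. Writing `|X| = Σ_g [⟨g⟩ ≤ X]` and exchanging sums, Möbius inversion turns
`Σ_X |X| μ(X, G)` into the number of generators of `G`, so `m_{G,G} = 0` exactly when `G` is
not cyclic. In a simple group `G` is the only nontrivial normal subgroup, and a simple group is
cyclic exactly when it is abelian.
-/

open scoped Classical Pointwise

noncomputable instance (G : Type*) [Group G] [Finite G] : Fintype (Subgroup G) :=
  Fintype.ofFinite _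

/-- The Möbius function of the subgroup lattice of a finite group `G`, defined as the
matrix inverse of the zeta matrix whose `(K, D)` entry is `1` if `K ≤ D` and `0` otherwise. -/
noncomputable def subgroupMu (G : Type*) [Group G] [Finite G] :
    Matrix (Subgroup G) (Subgroup G) ℚ :=
  (Matrix.of fun K D : Subgroup G => if K ≤ D then (1 : ℚ) else 0)⁻¹

/-- `m_{G,N} = (1/|G|) · Σ_{X ≤ G, XN = G} |X| · μ(X, G)`. -/
noncomputable def mGN (G : Type*) [Group G] [Finite G] (N : Subgroup G) : ℚ :=
  (1 / (Nat.card G : ℚ)) *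
    ∑ X : Subgroup G,
      if (X : Set G) * (N : Set G) = (Set.univ : Set G)
      then (Nat.card X : ℚ) * subgroupMu G X ⊤ else 0

/-- A finite group `G` is a `B`-group if `m_{G,N} = 0` for every nontrivial normal
subgroup `N` of `G`. -/
def IsBGroup (G : Type*) [Group G] [Finite G] : Prop :=
  ∀ N : Subgroup G, N.Normal → N ≠ ⊥ → mGN G N = 0

namespace IncidenceAlgebra

variable {𝕜 α : Type*} [Ring 𝕜] [PartialOrder α] [Fintype α] [LocallyFiniteOrder α]

lemma sum_zeta_mul_mu (a b : α) :
    ∑ x, (if a ≤ x then (1 : 𝕜) else 0) * mu 𝕜 x b = if a = b then 1 else 0 := by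
  rw [← sum_Icc_mu_left a b]
  refine (Finset.sum_subset (Finset.subset_univ _) fun x _ hx => ?_).symm.trans
    (Finset.sum_congr rfl fun x hx => ?_)
  · rcases not_and_or.1 (Finset.mem_Icc.not.1 hx) with hax | hxb
    · rw [if_neg hax, zero_mul]
    · rw [apply_eq_zero_of_not_le hxb, mul_zero]
  · rw [if_pos (Finset.mem_Icc.1 hx).1, one_mul]

lemma zetaMatrix_mul_muMatrix :
    (Matrix.of fun a b : α => if a ≤ b then (1 : 𝕜) else 0) * Matrix.of (mu 𝕜 · ·) = 1 := by
  ext a b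
  simpa only [Matrix.mul_apply, Matrix.of_apply, Matrix.one_apply] using sum_zeta_mul_mu a b

end IncidenceAlgebra

lemma IsSimpleGroup.isCyclic_iff_mul_comm {G : Type*} [Group G] [IsSimpleGroup G] :
    IsCyclic G ↔ ∀ a b : G, a * b = b * a :=
  ⟨fun _ => IsCyclic.commGroup.mul_comm,
    fun h => @IsSimpleGroup.isCyclic G { ‹Group G› with mul_comm := h } _⟩

section

open IncidenceAlgebra

variable {G : Type*} [Group G] [Finite G]

noncomputable instance : LocallyFiniteOrder (Subgroup G) :=
  Fintype.toLocallyFiniteOrder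

lemma subgroupMu_eq_mu : subgroupMu G = Matrix.of (mu ℚ · ·) :=
  Matrix.inv_eq_right_inv zetaMatrix_mul_muMatrix

lemma sum_card_mul_subgroupMu_top :
    ∑ X : Subgroup G, (Nat.card X : ℚ) * subgroupMu G X ⊤ =
      Nat.card {g : G // Subgroup.zpowers g = ⊤} := by
  have := Fintype.ofFinite G
  have card_eq_sum (X : Subgroup G) : (Nat.card X : ℚ) = ∑ g : G, if g ∈ X then 1 else 0 := by
    rw [Finset.sum_boole, Nat.card_eq_fintype_card, Fintype.card_subtype]
  calc ∑ X : Subgroup G, (Nat.card X : ℚ) * subgroupMu G X ⊤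
      = ∑ g : G, ∑ X : Subgroup G,
          (if Subgroup.zpowers g ≤ X then (1 : ℚ) else 0) * mu ℚ X ⊤ := by
        simp only [card_eq_sum, Finset.sum_mul, Subgroup.zpowers_le, subgroupMu_eq_mu,
          Matrix.of_apply]
        exact Finset.sum_comm
    _ = ∑ g : G, if Subgroup.zpowers g = ⊤ then (1 : ℚ) else 0 := by
        simp only [sum_zeta_mul_mu]
    _ = Nat.card {g : G // Subgroup.zpowers g = ⊤} := by
        rw [Finset.sum_boole, Nat.card_eq_fintype_card, Fintype.card_subtype]

lemma mGN_top : mGN G ⊤ = Nat.card {g : G // Subgroup.zpowers g = ⊤} / Nat.card G := by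
  have mul_top (X : Subgroup G) : (X : Set G) * ((⊤ : Subgroup G) : Set G) = Set.univ := by
    rw [Subgroup.coe_top]
    exact Set.mul_univ_of_one_mem X.one_mem
  simp only [mGN, mul_top, if_true, sum_card_mul_subgroupMu_top]
  ring

lemma mGN_top_eq_zero_iff : mGN G ⊤ = 0 ↔ ¬ IsCyclic G := by
  rw [mGN_top, div_eq_zero_iff, or_iff_left (Nat.cast_ne_zero.2 Nat.card_pos.ne'),
    Nat.cast_eq_zero, Finite.card_eq_zero_iff, isEmpty_subtype,
    isCyclic_iff_exists_zpowers_eq_top, not_exists]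

lemma IsSimpleGroup.isBGroup_iff [IsSimpleGroup G] : IsBGroup G ↔ mGN G ⊤ = 0 := by
  refine ⟨fun h => h ⊤ inferInstance top_ne_bot, fun h N hN hN_ne_bot => ?_⟩
  rwa [(eq_bot_or_eq_top_of_normal N hN).resolve_left hN_ne_bot]

end

/-- A finite simple group is a `B`-group iff it is not abelian. -/
theorem isBGroup_iff_not_abelian (G : Type*) [Group G] [Finite G]
    (hG : IsSimpleGroup G) :
    IsBGroup G ↔ ¬ (∀ a b : G, a * b = b * a) := by
  rw [hG.isBGroup_iff, mGN_top_eq_zero_iff, hG.isCyclic_iff_mul_comm]
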